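/- arXiv:1103.4177 — 3 statements merged into one kernel-verified Lean document; each statement's English description precedes it below -/
import Mathlib

section
/- Let X1, Ŷ2, Y2, U, Y3 be discrete random variables on a finite probability space such that (X1, Ŷ2) → Y2 → U form a Markov chain (X1 and Ŷ2 jointly conditionally independent of U given Y2). Then I(X1, U, Ŷ2; Y3) − I(U, Ŷ2; Y2 | X1) ≥ I(X1, Ŷ2; Y3) − I(Ŷ2; Y2 | X1) + I(U; Y3) − I(U; Y2). -/
open Finset

section InfoTheory

variable {Ω : Type*} [Fintype Ω]

/-- `p` is a probability mass function on the finite sample space `Ω`. -/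
def IsPMF (p : Ω → ℝ) : Prop := (∀ ω, 0 ≤ p ω) ∧ ∑ ω, p ω = 1

/-- Probability that the random variable `X` takes the value `a`. -/
noncomputable def prob (p : Ω → ℝ) {α : Type*} [Fintype α] [DecidableEq α]
    (X : Ω → α) (a : α) : ℝ :=
  ∑ ω, if X ω = a then p ω else 0

/-- Shannon entropy (base 2) of the random variable `X`. -/
noncomputable def ent (p : Ω → ℝ) {α : Type*} [Fintype α] [DecidableEq α]
    (X : Ω → α) : ℝ :=
  ∑ a, -(prob p X a * Real.logb 2 (prob p X a))

/-- Conditional entropy `H(X | Y)` (base 2). -/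
noncomputable def condEnt (p : Ω → ℝ) {α β : Type*} [Fintype α] [DecidableEq α]
    [Fintype β] [DecidableEq β] (X : Ω → α) (Y : Ω → β) : ℝ :=
  ent p (fun ω => (X ω, Y ω)) - ent p Y

/-- Mutual information `I(X; Y)` (base 2). -/
noncomputable def mutInfo (p : Ω → ℝ) {α β : Type*} [Fintype α] [DecidableEq α]
    [Fintype β] [DecidableEq β] (X : Ω → α) (Y : Ω → β) : ℝ :=
  ent p X + ent p Y - ent p (fun ω => (X ω, Y ω))

/-- Conditional mutual information `I(X; Y | Z)` (base 2). -/
noncomputable def condMutInfo (p : Ω → ℝ) {α β γ : Type*} [Fintype α] [DecidableEq α]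
    [Fintype β] [DecidableEq β] [Fintype γ] [DecidableEq γ]
    (X : Ω → α) (Y : Ω → β) (Z : Ω → γ) : ℝ :=
  condEnt p X Z + condEnt p Y Z - condEnt p (fun ω => (X ω, Y ω)) Z

/-- `X` and `Y` are conditionally independent given `Z`
(equivalently, `X → Z → Y` is a Markov chain). -/
def CondIndep (p : Ω → ℝ) {α β γ : Type*} [Fintype α] [DecidableEq α]
    [Fintype β] [DecidableEq β] [Fintype γ] [DecidableEq γ]
    (X : Ω → α) (Y : Ω → β) (Z : Ω → γ) : Prop :=
  ∀ a b c, prob p (fun ω => (X ω, Z ω)) (a, c) * prob p (fun ω => (Y ω, Z ω)) (b, c)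
    = prob p (fun ω => (X ω, Y ω, Z ω)) (a, b, c) * prob p Z c

/-- `X` and `Y` are independent. -/
def Indep (p : Ω → ℝ) {α β : Type*} [Fintype α] [DecidableEq α]
    [Fintype β] [DecidableEq β] (X : Ω → α) (Y : Ω → β) : Prop :=
  ∀ a b, prob p (fun ω => (X ω, Y ω)) (a, b) = prob p X a * prob p Y b

end InfoTheory

/-! Entropies are computed as expectations `H(X) = -∑ ω, p ω * log₂ p_X(X ω)`, so that
every information identity reduces to a pointwise identity between logarithms of marginals.
`I(W; U | Y3) ≥ 0` (Gibbs' inequality) and `I(W; U | Y2) = 0` for `W = (X1, Ŷ2)` (the Markov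
chain) combine with the chain rule to give the inequality: its two sides differ by exactly
`I(W; U | Y3) - I(W; U | Y2)`. -/

theorem sum_mul_log_le_sum_mul_log {ι : Type*} [Fintype ι] {r q : ι → ℝ}
    (hr : ∀ i, 0 ≤ r i) (hq : ∀ i, 0 ≤ q i) (hpos : ∀ i, 0 < r i → 0 < q i)
    (hsum : ∑ i, q i ≤ ∑ i, r i) :
    ∑ i, r i * Real.log (q i) ≤ ∑ i, r i * Real.log (r i) := by
  have term : ∀ i, r i * Real.log (q i) - r i * Real.log (r i) ≤ q i - r i := by
    intro i
    rcases (hr i).eq_or_lt with h0 | h0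
    · simp [← h0, hq i]
    · have h := mul_le_mul_of_nonneg_left
        (Real.log_le_sub_one_of_pos (div_pos (hpos i h0) h0)) h0.le
      rwa [Real.log_div (hpos i h0).ne' h0.ne', mul_sub, mul_sub, mul_div_cancel₀ _ h0.ne',
        mul_one] at h
  have h := Finset.sum_le_sum fun i (_ : i ∈ univ) => term i
  rw [sum_sub_distrib, sum_sub_distrib] at h
  linarith

section Entropy

variable {Ω α β γ : Type*} [Fintype Ω] [Fintype α] [DecidableEq α] [Fintype β] [DecidableEq β]
  [Fintype γ] [DecidableEq γ] {p : Ω → ℝ}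

theorem sum_prob_mul (X : Ω → α) (f : α → ℝ) :
    ∑ a, prob p X a * f a = ∑ ω, p ω * f (X ω) := by
  simp only [prob, sum_mul, ite_mul, zero_mul]
  rw [sum_comm]
  simp

theorem sum_prob (X : Ω → α) : ∑ a, prob p X a = ∑ ω, p ω := by
  simpa using sum_prob_mul (p := p) X fun _ => 1

theorem sum_prob_pair_left (X : Ω → α) (Y : Ω → β) (b : β) :
    ∑ a, prob p (fun ω => (X ω, Y ω)) (a, b) = prob p Y b := by
  simp only [prob]
  rw [sum_comm]
  refine sum_congr rfl fun ω _ => ?_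
  by_cases h : Y ω = b <;> simp [h]

theorem prob_nonneg (hp : ∀ ω, 0 ≤ p ω) (X : Ω → α) (a : α) : 0 ≤ prob p X a :=
  sum_nonneg fun ω _ => by split_ifs <;> simp [hp ω]

theorem prob_self_pos (hp : ∀ ω, 0 ≤ p ω) {ω : Ω} (hω : 0 < p ω) (X : Ω → α) :
    0 < prob p X (X ω) := by
  refine hω.trans_le ?_
  unfold prob
  simpa using single_le_sum (f := fun ω' => if X ω' = X ω then p ω' else 0)
    (fun ω' _ => by split_ifs <;> simp [hp ω']) (mem_univ ω)

theorem exists_of_prob_pos {X : Ω → α} {a : α} (h : 0 < prob p X a) :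
    ∃ ω, X ω = a ∧ 0 < p ω := by
  obtain ⟨ω, -, hω⟩ := exists_lt_of_sum_lt (by simpa using h : ∑ _ω : Ω, (0 : ℝ) < prob p X a)
  split_ifs at hω with hX
  exacts [⟨ω, hX, hω⟩, (lt_irrefl 0 hω).elim]

theorem prob_congr {X : Ω → α} {Y : Ω → β} {a : α} {b : β} (h : ∀ ω, X ω = a ↔ Y ω = b) :
    prob p X a = prob p Y b := by
  simp only [prob, h]

theorem ent_eq_sum (X : Ω → α) : ent p X = -∑ ω, p ω * Real.logb 2 (prob p X (X ω)) := by
  rw [ent, sum_neg_distrib, sum_prob_mul X fun a => Real.logb 2 (prob p X a)]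

theorem ent_congr_of_eq_iff {X : Ω → α} {Y : Ω → β} (h : ∀ ω ω', X ω = X ω' ↔ Y ω = Y ω') :
    ent p X = ent p Y := by
  simp only [ent_eq_sum, prob, h]

theorem condMutInfo_eq_sum (X : Ω → α) (Y : Ω → β) (Z : Ω → γ) :
    condMutInfo p X Y Z = ∑ ω, p ω *
      (Real.logb 2 (prob p (fun ω => ((X ω, Y ω), Z ω)) ((X ω, Y ω), Z ω))
        + Real.logb 2 (prob p Z (Z ω))
        - Real.logb 2 (prob p (fun ω => (X ω, Z ω)) (X ω, Z ω))
        - Real.logb 2 (prob p (fun ω => (Y ω, Z ω)) (Y ω, Z ω))) := by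
  simp only [condMutInfo, condEnt, ent_eq_sum, mul_add, mul_sub, sum_add_distrib,
    sum_sub_distrib]
  ring

theorem condMutInfo_nonneg (hp : ∀ ω, 0 ≤ p ω) (X : Ω → α) (Y : Ω → β) (Z : Ω → γ) :
    0 ≤ condMutInfo p X Y Z := by
  set V := fun ω => ((X ω, Y ω), Z ω)
  -- the distribution of `V` under which `X` and `Y` are conditionally independent given `Z`
  set q : (α × β) × γ → ℝ := fun v =>
    prob p (fun ω => (X ω, Z ω)) (v.1.1, v.2) * prob p (fun ω => (Y ω, Z ω)) (v.1.2, v.2)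
      / prob p Z v.2
  have hq_nonneg : ∀ v, 0 ≤ q v := fun v =>
    div_nonneg (mul_nonneg (prob_nonneg hp _ _) (prob_nonneg hp _ _)) (prob_nonneg hp _ _)
  have hq_pos : ∀ v, 0 < prob p V v → 0 < q v := by
    intro v hv
    obtain ⟨ω, rfl, hω⟩ := exists_of_prob_pos hv
    exact div_pos (mul_pos (prob_self_pos hp hω _) (prob_self_pos hp hω _))
      (prob_self_pos hp hω Z)
  have hq_sum : ∑ v, q v = ∑ v, prob p V v := by
    rw [sum_prob, ← sum_prob (p := p) Z, Fintype.sum_prod_type_right]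
    refine sum_congr rfl fun c _ => ?_
    simp only [q, Fintype.sum_prod_type, ← sum_div, ← sum_mul_sum]
    rw [sum_prob_pair_left, sum_prob_pair_left, mul_self_div_self]
  have hpointwise : condMutInfo p X Y Z
      = ∑ ω, p ω * (Real.logb 2 (prob p V (V ω)) - Real.logb 2 (q (V ω))) := by
    rw [condMutInfo_eq_sum]
    refine sum_congr rfl fun ω _ => ?_
    rcases (hp ω).eq_or_lt with h0 | h0
    · simp [← h0]
    have hXZ := (prob_self_pos hp h0 fun ω => (X ω, Z ω)).ne'
    have hYZ := (prob_self_pos hp h0 fun ω => (Y ω, Z ω)).ne'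
    rw [Real.logb_div (mul_ne_zero hXZ hYZ) (prob_self_pos hp h0 Z).ne', Real.logb_mul hXZ hYZ]
    ring
  have gibbs := sum_mul_log_le_sum_mul_log (prob_nonneg hp V) hq_nonneg hq_pos hq_sum.le
  rw [hpointwise, ← sum_prob_mul V fun v => Real.logb 2 (prob p V v) - Real.logb 2 (q v)]
  simp only [Real.logb, mul_sub, sum_sub_distrib, ← mul_div_assoc, ← sum_div, sub_nonneg]
  exact div_le_div_of_nonneg_right gibbs (Real.log_pos one_lt_two).le

theorem CondIndep.condMutInfo_eq_zero {X : Ω → α} {Y : Ω → β} {Z : Ω → γ}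
    (h : CondIndep p X Y Z) (hp : ∀ ω, 0 ≤ p ω) : condMutInfo p X Y Z = 0 := by
  rw [condMutInfo_eq_sum]
  refine sum_eq_zero fun ω _ => ?_
  rcases (hp ω).eq_or_lt with h0 | h0
  · simp [← h0]
  have hfactor := h (X ω) (Y ω) (Z ω)
  rw [prob_congr (X := fun ω => (X ω, Y ω, Z ω)) (Y := fun ω => ((X ω, Y ω), Z ω))
    (b := ((X ω, Y ω), Z ω)) fun _ => by simp only [Prod.mk.injEq, and_assoc]] at hfactor
  have hlog := congrArg (Real.logb 2) hfactor
  rw [Real.logb_mul (prob_self_pos hp h0 _).ne' (prob_self_pos hp h0 _).ne',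
    Real.logb_mul (prob_self_pos hp h0 _).ne' (prob_self_pos hp h0 _).ne'] at hlog
  linear_combination (-p ω) * hlog

end Entropy

/-- If `(X1, Ŷ2) → Y2 → U` is a Markov chain, then
`I(X1, U, Ŷ2; Y3) − I(U, Ŷ2; Y2 | X1)
  ≥ I(X1, Ŷ2; Y3) − I(Ŷ2; Y2 | X1) + I(U; Y3) − I(U; Y2)`. -/
theorem stmt5 {Ω α β γ δ υ : Type*} [Fintype Ω] [Fintype α] [DecidableEq α]
    [Fintype β] [DecidableEq β] [Fintype γ] [DecidableEq γ]
    [Fintype δ] [DecidableEq δ] [Fintype υ] [DecidableEq υ]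
    (p : Ω → ℝ) (hp : IsPMF p)
    (X1 : Ω → α) (Yh2 : Ω → δ) (Y2 : Ω → β) (U : Ω → υ) (Y3 : Ω → γ)
    (hMarkov : CondIndep p (fun ω => (X1 ω, Yh2 ω)) U Y2) :
    mutInfo p (fun ω => (X1 ω, U ω, Yh2 ω)) Y3
      - condMutInfo p (fun ω => (U ω, Yh2 ω)) Y2 X1
    ≥ mutInfo p (fun ω => (X1 ω, Yh2 ω)) Y3 - condMutInfo p Yh2 Y2 X1
      + mutInfo p U Y3 - mutInfo p U Y2 := by
  have hY3 := condMutInfo_nonneg hp.1 (fun ω => (X1 ω, Yh2 ω)) U Y3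
  have hY2 := hMarkov.condMutInfo_eq_zero hp.1
  have hX1UYh2 : ent p (fun ω => ((U ω, Yh2 ω), X1 ω)) = ent p (fun ω => (X1 ω, U ω, Yh2 ω)) :=
    ent_congr_of_eq_iff fun _ _ => by simp only [Prod.mk.injEq]; tauto
  have hWUY3 : ent p (fun ω => ((X1 ω, U ω, Yh2 ω), Y3 ω))
      = ent p (fun ω => (((X1 ω, Yh2 ω), U ω), Y3 ω)) :=
    ent_congr_of_eq_iff fun _ _ => by simp only [Prod.mk.injEq]; tauto
  have hWUY2 : ent p (fun ω => (((U ω, Yh2 ω), Y2 ω), X1 ω))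
      = ent p (fun ω => (((X1 ω, Yh2 ω), U ω), Y2 ω)) :=
    ent_congr_of_eq_iff fun _ _ => by simp only [Prod.mk.injEq]; tauto
  have hW : ent p (fun ω => (Yh2 ω, X1 ω)) = ent p (fun ω => (X1 ω, Yh2 ω)) :=
    ent_congr_of_eq_iff fun _ _ => by simp only [Prod.mk.injEq]; tauto
  have hWY2 : ent p (fun ω => ((Yh2 ω, Y2 ω), X1 ω)) = ent p (fun ω => ((X1 ω, Yh2 ω), Y2 ω)) :=
    ent_congr_of_eq_iff fun _ _ => by simp only [Prod.mk.injEq]; tauto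
  simp only [ge_iff_le, mutInfo, condMutInfo, condEnt] at *
  linarith
end

section
/- (Csiszár sum identity) Let Y^n = (Y_1,…,Y_n) and Z^n = (Z_1,…,Z_n) be two finite sequences of discrete random variables and M any discrete random variable, all on a finite probability space. Then Σ_{i=1}^n I(Y_{i+1}^n; Z_i | Z^{i-1}, M) = Σ_{i=1}^n I(Z^{i-1}; Y_i | Y_{i+1}^n, M), where Y_{i+1}^n = (Y_{i+1},…,Y_n), Z^{i-1} = (Z_1,…,Z_{i-1}), and empty tuples are constants. -/
open Finset

/-- `Z^k`-style prefix: `zp n Z k ω j = some (Z ω j)` iff `j < k`. -/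
noncomputable def zp {Ω β : Type*} (n : ℕ) (Z : Ω → Fin n → β) (k : ℕ) :
    Ω → Fin n → Option β :=
  fun ω j => if (j : ℕ) < k then some (Z ω j) else none

/-- `Y_k^n`-style suffix: `ys n Y k ω j = some (Y ω j)` iff `k ≤ j`. -/
noncomputable def ys {Ω α : Type*} (n : ℕ) (Y : Ω → Fin n → α) (k : ℕ) :
    Ω → Fin n → Option α :=
  fun ω j => if k ≤ (j : ℕ) then some (Y ω j) else none

lemma ent_relabel {Ω : Type*} [Fintype Ω] (p : Ω → ℝ) {α α' : Type*} [Fintype α] [DecidableEq α]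
    [Fintype α'] [DecidableEq α'] (X : Ω → α) (X' : Ω → α')
    (f : α → α') (g : α' → α)
    (hf : ∀ ω, f (X ω) = X' ω) (hg : ∀ ω, g (X' ω) = X ω) :
    ent p X' = ent p X := by
  classical
  set T : Finset α := Finset.univ.image X with hT
  have hmemT : ∀ a ∈ T, ∃ ω, X ω = a := by
    intro a ha
    obtain ⟨ω, -, h⟩ := Finset.mem_image.mp ha
    exact ⟨ω, h⟩
  have hgf : ∀ a ∈ T, g (f a) = a := by
    intro a ha
    obtain ⟨ω, rfl⟩ := hmemT a ha
    rw [hf, hg]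
  have hprob0 : ∀ b ∉ T.image f, prob p X' b = 0 := by
    intro b hb
    apply Finset.sum_eq_zero
    intro ω _
    have : X' ω ≠ b := by
      rintro rfl
      exact hb (Finset.mem_image.mpr ⟨X ω, Finset.mem_image.mpr ⟨ω, Finset.mem_univ ω, rfl⟩, hf ω⟩)
    simp [this]
  have hprobX0 : ∀ a ∉ T, prob p X a = 0 := by
    intro a ha
    apply Finset.sum_eq_zero
    intro ω _
    have : X ω ≠ a := fun h => ha (Finset.mem_image.mpr ⟨ω, Finset.mem_univ ω, h⟩)
    simp [this]
  have hprobeq : ∀ a ∈ T, prob p X' (f a) = prob p X a := by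
    intro a ha
    apply Finset.sum_congr rfl
    intro ω _
    have : (X' ω = f a) ↔ (X ω = a) := by
      constructor
      · intro h
        rw [← hg ω, h, hgf a ha]
      · intro h
        rw [← hf ω, h]
    simp only [this]
  have hinj : ∀ a ∈ T, ∀ a' ∈ T, f a = f a' → a = a' := by
    intro a ha a' ha' h
    rw [← hgf a ha, h, hgf a' ha']
  calc ent p X'
      = ∑ b ∈ T.image f, -(prob p X' b * Real.logb 2 (prob p X' b)) := by
        refine (Finset.sum_subset (Finset.subset_univ _) ?_).symm
        intro b _ hb
        simp [hprob0 b hb]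
    _ = ∑ a ∈ T, -(prob p X' (f a) * Real.logb 2 (prob p X' (f a))) := Finset.sum_image hinj
    _ = ∑ a ∈ T, -(prob p X a * Real.logb 2 (prob p X a)) := by
        refine Finset.sum_congr rfl fun a ha => ?_
        rw [hprobeq a ha]
    _ = ent p X := by
        refine Finset.sum_subset (Finset.subset_univ _) ?_
        intro a _ ha
        simp [hprobX0 a ha]

/-- Csiszár sum identity:
`Σ_i I(Y_{i+1}^n; Z_i | Z^{i-1}, M) = Σ_i I(Z^{i-1}; Y_i | Y_{i+1}^n, M)`. -/
theorem stmt6 {Ω α β γ : Type*} [Fintype Ω] [Fintype α] [DecidableEq α]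
    [Fintype β] [DecidableEq β] [Fintype γ] [DecidableEq γ]
    (n : ℕ) (p : Ω → ℝ) (hp : IsPMF p)
    (Y : Ω → Fin n → α) (Z : Ω → Fin n → β) (M : Ω → γ) :
    ∑ i : Fin n,
      condMutInfo p
        (fun ω => fun j : Fin n => if i < j then some (Y ω j) else none)
        (fun ω => Z ω i)
        (fun ω => ((fun j : Fin n => if j < i then some (Z ω j) else none), M ω))
    = ∑ i : Fin n,
      condMutInfo p
        (fun ω => fun j : Fin n => if j < i then some (Z ω j) else none)
        (fun ω => Y ω i)
        (fun ω => ((fun j : Fin n => if i < j then some (Y ω j) else none), M ω)) := by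
  classical
  by_cases hΩ : IsEmpty Ω
  · simp [condMutInfo, condEnt, ent, prob, Finset.univ_eq_empty]
  · have hne : Nonempty Ω := not_isEmpty_iff.mp hΩ
    obtain ⟨ω0⟩ := hne
    set G : ℕ → ℝ := fun k =>
      ent p (fun ω => (zp n Z k ω, M ω)) + ent p (fun ω => (ys n Y k ω, M ω))
        - ent p (fun ω => (zp n Z k ω, ys n Y k ω, M ω)) with hG
    have key : ∀ i : Fin n,
        condMutInfo p
          (fun ω => fun j : Fin n => if i < j then some (Y ω j) else none)
          (fun ω => Z ω i)
          (fun ω => ((fun j : Fin n => if j < i then some (Z ω j) else none), M ω))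
        = condMutInfo p
          (fun ω => fun j : Fin n => if j < i then some (Z ω j) else none)
          (fun ω => Y ω i)
          (fun ω => ((fun j : Fin n => if i < j then some (Y ω j) else none), M ω))
          + (G ((i : ℕ) + 1) - G i) := by
      intro i
      set a0 : α := Y ω0 i with ha0
      set b0 : β := Z ω0 i with hb0
      have hz : ∀ ω, (fun j : Fin n => if j < i then some (Z ω j) else none)
          = zp n Z (i : ℕ) ω := by
        intro ω
        funext j
        by_cases h : (j : ℕ) < (i : ℕ)
        · rw [if_pos (Fin.lt_def.mpr h)]
          simp only [zp, if_pos h]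
        · rw [if_neg (fun hc => h (Fin.lt_def.mp hc))]
          simp only [zp, if_neg h]
      have hy : ∀ ω, (fun j : Fin n => if i < j then some (Y ω j) else none)
          = ys n Y ((i : ℕ) + 1) ω := by
        intro ω
        funext j
        by_cases h : (i : ℕ) < (j : ℕ)
        · rw [if_pos (Fin.lt_def.mpr h)]
          simp only [ys, if_pos (by omega : (i : ℕ) + 1 ≤ (j : ℕ))]
        · rw [if_neg (fun hc => h (Fin.lt_def.mp hc))]
          simp only [ys, if_neg (by omega : ¬ ((i : ℕ) + 1 ≤ (j : ℕ)))]
      simp only [condMutInfo, condEnt, hz, hy, hG]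
      have zpi_self : ∀ ω, zp n Z (i : ℕ) ω i = none := by
        intro ω; simp [zp]
      have zps_self : ∀ ω, zp n Z ((i : ℕ) + 1) ω i = some (Z ω i) := by
        intro ω; simp [zp]
      have zps_ne : ∀ ω, ∀ j : Fin n, j ≠ i → zp n Z ((i : ℕ) + 1) ω j = zp n Z (i : ℕ) ω j := by
        intro ω j hj
        have hne : (j : ℕ) ≠ (i : ℕ) := fun h => hj (Fin.ext h)
        simp only [zp]
        rw [if_congr (show ((j : ℕ) < (i : ℕ) + 1) ↔ ((j : ℕ) < (i : ℕ)) by omega) rfl rfl]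
      have ysi_self : ∀ ω, ys n Y (i : ℕ) ω i = some (Y ω i) := by
        intro ω; simp [ys]
      have yss_self : ∀ ω, ys n Y ((i : ℕ) + 1) ω i = none := by
        intro ω; simp [ys]
      have yss_ne : ∀ ω, ∀ j : Fin n, j ≠ i → ys n Y ((i : ℕ) + 1) ω j = ys n Y (i : ℕ) ω j := by
        intro ω j hj
        have hne : (j : ℕ) ≠ (i : ℕ) := fun h => hj (Fin.ext h)
        simp only [ys]
        rw [if_congr (show ((i : ℕ) + 1 ≤ (j : ℕ)) ↔ ((i : ℕ) ≤ (j : ℕ)) by omega) rfl rfl]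
      have hzdel : ∀ ω, (fun j : Fin n => if j = i then none else zp n Z ((i : ℕ) + 1) ω j)
          = zp n Z (i : ℕ) ω := by
        intro ω; funext j
        by_cases hj : j = i
        · subst hj; rw [if_pos rfl, zpi_self]
        · rw [if_neg hj]; exact zps_ne ω j hj
      have hzins : ∀ ω, (fun j : Fin n => if j = i then some (Z ω i) else zp n Z (i : ℕ) ω j)
          = zp n Z ((i : ℕ) + 1) ω := by
        intro ω; funext j
        by_cases hj : j = i
        · subst hj; rw [if_pos rfl, zps_self]
        · rw [if_neg hj]; exact (zps_ne ω j hj).symm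
      have hydel : ∀ ω, (fun j : Fin n => if j = i then none else ys n Y (i : ℕ) ω j)
          = ys n Y ((i : ℕ) + 1) ω := by
        intro ω; funext j
        by_cases hj : j = i
        · subst hj; rw [if_pos rfl, yss_self]
        · rw [if_neg hj]; exact (yss_ne ω j hj).symm
      have hyins : ∀ ω, (fun j : Fin n => if j = i then some (Y ω i) else ys n Y ((i : ℕ) + 1) ω j)
          = ys n Y (i : ℕ) ω := by
        intro ω; funext j
        by_cases hj : j = i
        · subst hj; rw [if_pos rfl, ysi_self]
        · rw [if_neg hj]; exact yss_ne ω j hj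
      have r1 : (ent p fun ω => (ys n Y ((i : ℕ) + 1) ω, zp n Z (i : ℕ) ω, M ω))
          = ent p fun ω => (zp n Z (i : ℕ) ω, ys n Y ((i : ℕ) + 1) ω, M ω) :=
        ent_relabel p _ _ (fun x => (x.2.1, x.1, x.2.2)) (fun x => (x.2.1, x.1, x.2.2))
          (fun ω => rfl) (fun ω => rfl)
      have r2 : (ent p fun ω => (Z ω i, zp n Z (i : ℕ) ω, M ω))
          = ent p fun ω => (zp n Z ((i : ℕ) + 1) ω, M ω) := by
        refine ent_relabel p _ _
          (fun x => ((x.1 i).getD b0, fun j => if j = i then none else x.1 j, x.2))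
          (fun x => (fun j => if j = i then some x.1 else x.2.1 j, x.2.2)) ?_ ?_
        · intro ω
          show ((zp n Z ((i : ℕ) + 1) ω i).getD b0,
            (fun j : Fin n => if j = i then none else zp n Z ((i : ℕ) + 1) ω j), M ω)
            = (Z ω i, zp n Z (i : ℕ) ω, M ω)
          rw [hzdel ω, zps_self ω]
          rfl
        · intro ω
          show ((fun j : Fin n => if j = i then some (Z ω i) else zp n Z (i : ℕ) ω j), M ω)
            = (zp n Z ((i : ℕ) + 1) ω, M ω)
          rw [hzins ω]
      have r3 : (ent p fun ω => ((ys n Y ((i : ℕ) + 1) ω, Z ω i), zp n Z (i : ℕ) ω, M ω))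
          = ent p fun ω => (zp n Z ((i : ℕ) + 1) ω, ys n Y ((i : ℕ) + 1) ω, M ω) := by
        refine ent_relabel p _ _
          (fun x => ((x.2.1, (x.1 i).getD b0), fun j => if j = i then none else x.1 j, x.2.2))
          (fun x => (fun j => if j = i then some x.1.2 else x.2.1 j, x.1.1, x.2.2)) ?_ ?_
        · intro ω
          show ((ys n Y ((i : ℕ) + 1) ω, (zp n Z ((i : ℕ) + 1) ω i).getD b0),
            (fun j : Fin n => if j = i then none else zp n Z ((i : ℕ) + 1) ω j), M ω)
            = ((ys n Y ((i : ℕ) + 1) ω, Z ω i), zp n Z (i : ℕ) ω, M ω)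
          rw [hzdel ω, zps_self ω]
          rfl
        · intro ω
          show ((fun j : Fin n => if j = i then some (Z ω i) else zp n Z (i : ℕ) ω j),
            ys n Y ((i : ℕ) + 1) ω, M ω)
            = (zp n Z ((i : ℕ) + 1) ω, ys n Y ((i : ℕ) + 1) ω, M ω)
          rw [hzins ω]
      have r6 : (ent p fun ω => (Y ω i, ys n Y ((i : ℕ) + 1) ω, M ω))
          = ent p fun ω => (ys n Y (i : ℕ) ω, M ω) := by
        refine ent_relabel p _ _
          (fun x => ((x.1 i).getD a0, fun j => if j = i then none else x.1 j, x.2))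
          (fun x => (fun j => if j = i then some x.1 else x.2.1 j, x.2.2)) ?_ ?_
        · intro ω
          show ((ys n Y (i : ℕ) ω i).getD a0,
            (fun j : Fin n => if j = i then none else ys n Y (i : ℕ) ω j), M ω)
            = (Y ω i, ys n Y ((i : ℕ) + 1) ω, M ω)
          rw [hydel ω, ysi_self ω]
          rfl
        · intro ω
          show ((fun j : Fin n => if j = i then some (Y ω i) else ys n Y ((i : ℕ) + 1) ω j), M ω)
            = (ys n Y (i : ℕ) ω, M ω)
          rw [hyins ω]
      have r7 : (ent p fun ω => ((zp n Z (i : ℕ) ω, Y ω i), ys n Y ((i : ℕ) + 1) ω, M ω))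
          = ent p fun ω => (zp n Z (i : ℕ) ω, ys n Y (i : ℕ) ω, M ω) := by
        refine ent_relabel p _ _
          (fun x => ((x.1, (x.2.1 i).getD a0), fun j => if j = i then none else x.2.1 j, x.2.2))
          (fun x => (x.1.1, fun j => if j = i then some x.1.2 else x.2.1 j, x.2.2)) ?_ ?_
        · intro ω
          show ((zp n Z (i : ℕ) ω, (ys n Y (i : ℕ) ω i).getD a0),
            (fun j : Fin n => if j = i then none else ys n Y (i : ℕ) ω j), M ω)
            = ((zp n Z (i : ℕ) ω, Y ω i), ys n Y ((i : ℕ) + 1) ω, M ω)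
          rw [hydel ω, ysi_self ω]
          rfl
        · intro ω
          show (zp n Z (i : ℕ) ω,
            (fun j : Fin n => if j = i then some (Y ω i) else ys n Y ((i : ℕ) + 1) ω j), M ω)
            = (zp n Z (i : ℕ) ω, ys n Y (i : ℕ) ω, M ω)
          rw [hyins ω]
      rw [r1, r2, r3, r6, r7]
      ring
    rw [Finset.sum_congr rfl (fun i _ => key i), Finset.sum_add_distrib]
    have htel : ∑ i : Fin n, (G ((i : ℕ) + 1) - G i) = 0 := by
      rw [Fin.sum_univ_eq_sum_range (fun k => G (k + 1) - G k) n, Finset.sum_range_sub]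
      have hGn : G n = ent p (fun ω => M ω) := by
        have ysn : ∀ ω, ys n Y n ω = (fun _ : Fin n => (none : Option α)) := by
          intro ω; funext j
          have := j.isLt
          simp only [ys]
          rw [if_neg (by omega)]
        have e2n : (ent p fun ω => (ys n Y n ω, M ω)) = ent p (fun ω => M ω) :=
          ent_relabel p _ _ (fun m => ((fun _ => none), m)) (fun x => x.2)
            (fun ω => by rw [ysn ω]) (fun ω => rfl)
        have e3n : (ent p fun ω => (zp n Z n ω, ys n Y n ω, M ω))
            = ent p fun ω => (zp n Z n ω, M ω) :=
          ent_relabel p _ _ (fun x => (x.1, (fun _ => none), x.2)) (fun x => (x.1, x.2.2))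
            (fun ω => by rw [ysn ω]) (fun ω => rfl)
        simp only [hG]
        rw [e2n, e3n]
        ring
      have hG0 : G 0 = ent p (fun ω => M ω) := by
        have zp0 : ∀ ω, zp n Z 0 ω = (fun _ : Fin n => (none : Option β)) := by
          intro ω; funext j
          simp [zp]
        have e10 : (ent p fun ω => (zp n Z 0 ω, M ω)) = ent p (fun ω => M ω) :=
          ent_relabel p _ _ (fun m => ((fun _ => none), m)) (fun x => x.2)
            (fun ω => by rw [zp0 ω]) (fun ω => rfl)
        have e30 : (ent p fun ω => (zp n Z 0 ω, ys n Y 0 ω, M ω))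
            = ent p fun ω => (ys n Y 0 ω, M ω) :=
          ent_relabel p _ _ (fun x => ((fun _ => none), x)) (fun x => x.2)
            (fun ω => by rw [zp0 ω]) (fun ω => rfl)
        simp only [hG]
        rw [e10, e30]
        ring
      rw [hGn, hG0, sub_self]
    rw [htel, add_zero]
end

section
/- (Functional representation lemma) Let X and Y be discrete random variables taking values in finite sets 𝒳 and 𝒴 with joint pmf p(x,y). Then there exists a finite set 𝒱, a random variable V taking values in 𝒱 that is independent of X, and a function f : 𝒳 × 𝒱 → 𝒴, such that the pair (X, f(X,V)) has the same joint distribution as (X, Y). -/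
open Finset

/-- Functional representation lemma: for any joint pmf `p` on `α × β` there exist a
finite set `Fin m`, a pmf `q` on `α × Fin m` under which the two coordinates are
independent (so `V := Prod.snd` is independent of `X' := Prod.fst`), and a function
`f : α × Fin m → β` such that `(X', f (X', V))` has joint distribution `p`. -/
theorem stmt9 {α β : Type*} [Fintype α] [DecidableEq α] [Fintype β] [DecidableEq β]
    (p : α × β → ℝ) (hp : IsPMF p) :
    ∃ (m : ℕ) (q : α × Fin m → ℝ) (f : α × Fin m → β),
      IsPMF q ∧
      Indep q (Prod.fst : α × Fin m → α) (Prod.snd : α × Fin m → Fin m) ∧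
      (∀ a b, prob q (fun ω => (ω.1, f ω)) (a, b) = p (a, b)) := by

  classical
  obtain ⟨hp0, hp1⟩ := hp
  have hβ : Nonempty β := by
    by_contra h
    rw [not_nonempty_iff] at h
    have hz : ∑ ω : α × β, p ω = 0 :=
      Finset.sum_eq_zero fun x _ => (h.false x.2).elim
    rw [hz] at hp1; norm_num at hp1
  obtain ⟨b0⟩ := hβ
  set pX : α → ℝ := fun a => ∑ b, p (a, b) with hpX
  set c : α → β → ℝ := fun a b =>
    if pX a = 0 then (if b = b0 then 1 else 0) else p (a, b) / pX a with hc
  have hpX0 : ∀ a, 0 ≤ pX a := fun a => Finset.sum_nonneg fun b _ => hp0 _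
  have hc0 : ∀ a b, 0 ≤ c a b := by
    intro a b
    simp only [hc]
    split
    · split <;> norm_num
    · exact div_nonneg (hp0 _) (hpX0 a)
  have hc1 : ∀ a, ∑ b, c a b = 1 := by
    intro a
    by_cases ha : pX a = 0
    · simp [hc, ha]
    · simp only [hc, if_neg ha]
      rw [← Finset.sum_div, div_eq_one_iff_eq ha]
  have hpc : ∀ a b, pX a * c a b = p (a, b) := by
    intro a b
    by_cases ha : pX a = 0
    · have hb : p (a, b) = 0 := by
        have := (Finset.sum_eq_zero_iff_of_nonneg (fun b _ => hp0 (a, b))).mp ha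
        exact this b (Finset.mem_univ b)
      rw [ha, hb, zero_mul]
    · simp only [hc, if_neg ha]
      field_simp
  set m := Fintype.card (α → β) with hm
  set e : Fin m ≃ (α → β) := (Fintype.equivFin (α → β)).symm with he
  set q : α × Fin m → ℝ := fun ω => pX ω.1 * ∏ a', c a' (e ω.2 a') with hq
  -- key summation identity
  have key : ∀ g : α → β → ℝ, ∑ i : Fin m, ∏ a', g a' (e i a') = ∏ a', ∑ b, g a' b := by
    intro g
    rw [Equiv.sum_comp e (fun v => ∏ a', g a' (v a'))]
    rw [Finset.prod_univ_sum (fun _ => Finset.univ) g]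
    rw [Fintype.piFinset_univ]
  have hprod1 : ∑ i : Fin m, ∏ a', c a' (e i a') = 1 := by
    rw [key c]
    exact Finset.prod_eq_one fun a _ => hc1 a
  have hsumpX : ∑ a, pX a = 1 := by
    rw [← hp1, ← Fintype.sum_prod_type]
  have hqfst : ∀ a, prob q Prod.fst a = pX a := by
    intro a
    simp only [prob, Fintype.sum_prod_type]
    have : ∀ a', (∑ i : Fin m, if a' = a then q (a', i) else 0)
        = if a' = a then pX a' * ∑ i : Fin m, ∏ x, c x (e i x) else 0 := by
      intro a'
      split
      · rw [Finset.mul_sum]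
      · simp
    rw [Finset.sum_congr rfl fun a' _ => this a']
    rw [hprod1, Finset.sum_ite_eq' Finset.univ a (fun a' => pX a' * 1)]
    simp
  have hqsnd : ∀ i, prob q Prod.snd i = ∏ a', c a' (e i a') := by
    intro i
    simp only [prob, Fintype.sum_prod_type]
    have : ∀ a', (∑ j : Fin m, if j = i then q (a', j) else 0) = q (a', i) := by
      intro a'
      rw [Finset.sum_ite_eq' Finset.univ i (fun j => q (a', j))]
      simp
    rw [Finset.sum_congr rfl fun a' _ => this a']
    simp only [hq, ← Finset.sum_mul, hsumpX, one_mul]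
  refine ⟨m, q, fun ω => e ω.2 ω.1, ⟨fun ω => mul_nonneg (hpX0 _)
      (Finset.prod_nonneg fun a' _ => hc0 _ _), ?_⟩, ?_, ?_⟩
  · rw [Fintype.sum_prod_type]
    simp only [hq]
    calc ∑ a, ∑ i : Fin m, pX a * ∏ a', c a' (e i a')
        = ∑ a, pX a * ∑ i : Fin m, ∏ a', c a' (e i a') := by
          exact Finset.sum_congr rfl fun a _ => (Finset.mul_sum _ _ _).symm
      _ = 1 := by rw [hprod1]; simpa using hsumpX
  · intro a i
    have hid : prob q (fun ω => (ω.1, ω.2)) (a, i) = q (a, i) := by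
      simp only [prob, Prod.mk.eta]
      rw [Finset.sum_ite_eq' Finset.univ (a, i) q]
      simp
    rw [hid, hqfst, hqsnd]
  · intro a b
    simp only [prob, Fintype.sum_prod_type]
    have step : ∀ a', (∑ i : Fin m, if (a', e i a') = (a, b) then q (a', i) else 0)
        = if a' = a then pX a * ∑ i : Fin m, if e i a = b then ∏ x, c x (e i x) else 0
          else 0 := by
      intro a'
      by_cases ha' : a' = a
      · subst ha'
        rw [if_pos rfl, Finset.mul_sum]
        refine Finset.sum_congr rfl fun i _ => ?_
        simp only [Prod.mk.injEq, true_and, hq]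
        split <;> simp
      · rw [if_neg ha']
        exact Finset.sum_eq_zero fun i _ => by simp [Prod.ext_iff, ha']
    rw [Finset.sum_congr rfl fun a' _ => step a']
    rw [Finset.sum_ite_eq' Finset.univ a
      (fun a' => pX a * ∑ i : Fin m, if e i a = b then ∏ x, c x (e i x) else 0)]
    simp only [Finset.mem_univ, if_true]
    set g : α → β → ℝ := fun x y => if x = a then (if y = b then c x y else 0) else c x y
      with hg
    have hgprod : ∀ i : Fin m, (if e i a = b then ∏ x, c x (e i x) else 0)
        = ∏ x, g x (e i x) := by
      intro i
      by_cases hib : e i a = b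
      · rw [if_pos hib]
        refine Finset.prod_congr rfl fun x _ => ?_
        simp only [hg]
        by_cases hx : x = a
        · subst hx; rw [if_pos rfl, if_pos hib]
        · rw [if_neg hx]
      · rw [if_neg hib]
        symm
        apply Finset.prod_eq_zero (Finset.mem_univ a)
        simp [hg, hib]
    rw [Finset.sum_congr rfl fun i _ => hgprod i, key g]
    have hgsum : ∀ x, (∑ y, g x y) = if x = a then c a b else 1 := by
      intro x
      by_cases hx : x = a
      · subst hx
        simp only [hg, if_pos rfl]
        rw [Finset.sum_ite_eq' Finset.univ b (c x)]
        simp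
      · simp only [hg, if_neg hx]
        exact hc1 x
    rw [Finset.prod_congr rfl fun x _ => hgsum x]
    rw [Finset.prod_ite_eq' Finset.univ a (fun _ => c a b)]
    simp only [Finset.mem_univ, if_true]
    exact hpc a b
end
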